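/- There exists N such that for all n ≥ N, with d = 2^{n+1} − 3, the 2-density of the set D := {i : 1 ≤ i ≤ d, i odd} \ {2^n − 1, 3·2^{n−1} − 1} equals 2/(2n−1); that is, every solution U of any length ℓ for D satisfies (2n−1)·s(U) ≥ 2ℓ, and some solution attains (2n−1)·s(U) = 2ℓ. -/

import Mathlib

/-- The binary weight `s₂(m)`: the sum of the base-2 digits of `m`. -/
def s2 (m : ℕ) : ℕ := (Nat.digits 2 m).sum

/-- The shift map on `{0, …, 2^ℓ - 1}`: it fixes `2^ℓ - 1` and sends any other `i`
to the remainder of `2·i` modulo `2^ℓ - 1`. -/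
def shift2 (ℓ i : ℕ) : ℕ := if i = 2 ^ ℓ - 1 then i else (2 * i) % (2 ^ ℓ - 1)

/-- `U : ℕ → ℕ` (supported on `D`) is a solution of length `ℓ` for `D`:
`0 ≤ u_d ≤ 2^ℓ - 1` and `∑ d·u_d` is a positive multiple of `2^ℓ - 1`. -/
structure IsSolution (D : Finset ℕ) (ℓ : ℕ) (U : ℕ → ℕ) : Prop where
  len_pos : 1 ≤ ℓ
  bounded : ∀ d, U d ≤ 2 ^ ℓ - 1
  supp_sub : ∀ d, d ∉ D → U d = 0
  dvd : (2 ^ ℓ - 1) ∣ ∑ d ∈ D, d * U d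
  pos : 0 < ∑ d ∈ D, d * U d

/-- The weight `s(U) = ∑_{d ∈ D} s₂(u_d)` of a solution. -/
def weight (D : Finset ℕ) (U : ℕ → ℕ) : ℕ := ∑ d ∈ D, s2 (U d)

/-- The support map `φ_U(k) = (∑_{d ∈ D} d·δ^k(u_d)) / (2^ℓ - 1)` of a solution,
viewed as an `ℓ`-periodic function on `ℕ`. -/
def supportMap (D : Finset ℕ) (ℓ : ℕ) (U : ℕ → ℕ) (k : ℕ) : ℕ :=
  (∑ d ∈ D, d * (shift2 ℓ)^[k] (U d)) / (2 ^ ℓ - 1)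

/-- A solution is irreducible when its support map is injective on `ℤ/ℓℤ`,
i.e. injective on `{0, …, ℓ-1}`. -/
def IrreducibleSol (D : Finset ℕ) (ℓ : ℕ) (U : ℕ → ℕ) : Prop :=
  Set.InjOn (supportMap D ℓ U) ↑(Finset.range ℓ)

/-- `U` is a shift of `V` (coordinatewise iterate of the shift map). -/
def IsShiftOf (ℓ : ℕ) (U V : ℕ → ℕ) : Prop :=
  ∃ k, ∀ d, U d = (shift2 ℓ)^[k] (V d)

/-- The set of odd integers `1 ≤ i ≤ d`. -/
def oddUpTo (d : ℕ) : Finset ℕ := (Finset.range (d + 1)).filter (fun i => i % 2 = 1)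

/-- `D = {i : 1 ≤ i ≤ 2^{n+1} - 3, i odd}`. -/
def oddD (n : ℕ) : Finset ℕ := oddUpTo (2 ^ (n + 1) - 3)

/-- The solution with `u_a = 1` and all other coordinates `0`. -/
def sol1 (a : ℕ) : ℕ → ℕ := fun d => if d = a then 1 else 0

/-- The solution with `u_a = x`, `u_b = y` and all other coordinates `0`. -/
def sol2 (a x b y : ℕ) : ℕ → ℕ := fun d => if d = a then x else if d = b then y else 0

/-- The solution with `u_a = x`, `u_b = y`, `u_c = z` and all other coordinates `0`. -/
def sol3 (a x b y c z : ℕ) : ℕ → ℕ :=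
  fun d => if d = a then x else if d = b then y else if d = c then z else 0

/-!
Write `n = m + 2` and `P = 2^m`, so that `D` consists of the odd numbers up to `8P - 3` except
`4P - 1` and `6P - 1`. Along the shift, the support map `φ` of a solution is a positive
`ℓ`-periodic sequence with `2 φ(k) = φ(k + 1) + ∑_{d ∈ S_k} d`, where `S_k` collects the
coordinates whose `k`-th carry is `1`; over a period the carries are the binary digits, so
`∑ |S_k| = s(U)`. Hence it suffices to find a positive potential `F` with
`4 F(x) ≤ 2^((2n-1)|S|) F(x')` whenever `2x = x' + ∑ S`: multiplying around the cycle gives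
`4^ℓ ≤ 2^((2n-1) s(U))`.

We take `F(x) = x² θ(x)` with `θ ∈ [1/8, 1]`. A single cut `x ↦ 2x - d` is expensive only when
it lands on a small `x'`, so `θ(x)` is lowered to `2^(2n-1) / W²` on the "dangerous" part of a
doubling chain, below its top `W`; this makes those cuts cost exactly their allowance. Plain
doubling does not decrease `θ`, cuts landing above `4P` are paid for by `θ ≥ 1/8`, and two or
more cuts are cheap because each costs a factor `2^(2n-1)` against a gain of at most `O(P)`.
-/

open Finset

lemma s2_two_mul_add {a e : ℕ} (he : e ≤ 1) : s2 (2 * a + e) = s2 a + e := by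
  rcases Nat.eq_zero_or_pos (2 * a + e) with h | h
  · obtain ⟨rfl, rfl⟩ : a = 0 ∧ e = 0 := by omega
    rfl
  · rw [s2, Nat.digits_def' one_lt_two h, List.sum_cons, s2]
    rw [show (2 * a + e) % 2 = e by omega, show (2 * a + e) / 2 = a by omega, add_comm]

lemma s2_two_pow (k : ℕ) : s2 (2 ^ k) = 1 := by
  simpa [s2] using congrArg List.sum (Nat.digits_base_pow_mul (k := k) one_lt_two one_pos)

section Shift

variable {ℓ u : ℕ}

def carry (ℓ u : ℕ) : ℕ := if u = 2 ^ ℓ - 1 then 1 else 2 * u / (2 ^ ℓ - 1)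

lemma two_mul_eq_shift2_add_carry (ℓ u : ℕ) : 2 * u = shift2 ℓ u + carry ℓ u * (2 ^ ℓ - 1) := by
  unfold shift2 carry
  split_ifs with h
  · omega
  · exact (Nat.mod_add_div' _ _).symm

lemma carry_le_one (hu : u ≤ 2 ^ ℓ - 1) : carry ℓ u ≤ 1 := by
  unfold carry
  split_ifs with h
  · rfl
  · exact Nat.le_of_lt_succ <| (Nat.div_lt_iff_lt_mul (by omega)).2 (by omega)

lemma shift2_le (hu : u ≤ 2 ^ ℓ - 1) : shift2 ℓ u ≤ 2 ^ ℓ - 1 := by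
  unfold shift2
  split_ifs with h
  · exact hu
  · exact (Nat.mod_lt _ (by omega)).le

lemma iterate_shift2_le (hu : u ≤ 2 ^ ℓ - 1) (k : ℕ) : (shift2 ℓ)^[k] u ≤ 2 ^ ℓ - 1 := by
  induction k with
  | zero => exact hu
  | succ k ih => rw [Function.iterate_succ_apply']; exact shift2_le ih

lemma shift2_pos (hℓ : 1 ≤ ℓ) (hu : u ≤ 2 ^ ℓ - 1) (h : 0 < u) : 0 < shift2 ℓ u := by
  unfold shift2
  split_ifs with hT
  · exact h
  · refine Nat.pos_of_ne_zero fun h0 => ?_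
    have hodd : Odd (2 ^ ℓ - 1) :=
      Nat.Even.sub_odd (Nat.one_le_two_pow) ((Nat.even_pow' (by omega)).2 even_two) odd_one
    have := (Nat.coprime_two_left.2 hodd).symm.dvd_of_dvd_mul_left (Nat.dvd_of_mod_eq_zero h0)
    have := Nat.le_of_dvd h this
    omega

lemma iterate_shift2_pos (hℓ : 1 ≤ ℓ) (hu : u ≤ 2 ^ ℓ - 1) (h : 0 < u) (k : ℕ) :
    0 < (shift2 ℓ)^[k] u := by
  induction k with
  | zero => exact h
  | succ k ih =>
    rw [Function.iterate_succ_apply']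
    exact shift2_pos hℓ (iterate_shift2_le hu k) ih

lemma iterate_shift2_of_lt (hu : u < 2 ^ ℓ - 1) (k : ℕ) :
    (shift2 ℓ)^[k] u = 2 ^ k * u % (2 ^ ℓ - 1) := by
  induction k with
  | zero => simp [Nat.mod_eq_of_lt hu]
  | succ k ih =>
    rw [Function.iterate_succ_apply', ih, shift2, if_neg (Nat.mod_lt _ (by omega)).ne,
      Nat.mul_mod_mod, pow_succ, mul_comm _ 2, mul_assoc]

lemma iterate_shift2_self (hu : u ≤ 2 ^ ℓ - 1) : (shift2 ℓ)^[ℓ] u = u := by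
  rcases hu.eq_or_lt with h | h
  · exact Function.iterate_fixed (by rw [shift2, if_pos h]) ℓ
  · rw [iterate_shift2_of_lt h, show 2 ^ ℓ * u = u + u * (2 ^ ℓ - 1) by
      zify [Nat.one_le_two_pow]; ring, Nat.add_mul_mod_self_right, Nat.mod_eq_of_lt h]

/-- The number whose binary digits are the first `j` carries of `u`, most significant first. -/
def carryNumber (ℓ u : ℕ) : ℕ → ℕ
  | 0 => 0
  | j + 1 => 2 * carryNumber ℓ u j + carry ℓ ((shift2 ℓ)^[j] u)

lemma two_pow_mul_eq_iterate_add (ℓ u j : ℕ) :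
    2 ^ j * u = (shift2 ℓ)^[j] u + (2 ^ ℓ - 1) * carryNumber ℓ u j := by
  induction j with
  | zero => simp [carryNumber]
  | succ j ih =>
    rw [pow_succ, mul_comm _ 2, mul_assoc, ih, carryNumber, Function.iterate_succ_apply',
      mul_add, two_mul_eq_shift2_add_carry ℓ ((shift2 ℓ)^[j] u)]
    ring

lemma s2_carryNumber (hu : u ≤ 2 ^ ℓ - 1) (j : ℕ) :
    s2 (carryNumber ℓ u j) = ∑ k ∈ range j, carry ℓ ((shift2 ℓ)^[k] u) := by
  induction j with
  | zero => rfl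
  | succ j ih =>
    rw [carryNumber, s2_two_mul_add (carry_le_one (iterate_shift2_le hu j)), ih, sum_range_succ]

lemma sum_carry_iterate_shift2 (hℓ : 1 ≤ ℓ) (hu : u ≤ 2 ^ ℓ - 1) :
    ∑ k ∈ range ℓ, carry ℓ ((shift2 ℓ)^[k] u) = s2 u := by
  have h := two_pow_mul_eq_iterate_add ℓ u ℓ
  rw [iterate_shift2_self hu, show 2 ^ ℓ * u = u + (2 ^ ℓ - 1) * u by
    zify [Nat.one_le_two_pow]; ring] at h
  have hT : 0 < 2 ^ ℓ - 1 := Nat.sub_pos_of_lt (Nat.one_lt_two_pow (by omega))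
  have hE : carryNumber ℓ u ℓ = u := Nat.eq_of_mul_eq_mul_left hT (by omega)
  rw [← s2_carryNumber hu, hE]

end Shift

section Solution

variable {D : Finset ℕ} {ℓ : ℕ} {U : ℕ → ℕ}

def carrySet (D : Finset ℕ) (ℓ : ℕ) (U : ℕ → ℕ) (k : ℕ) : Finset ℕ :=
  {d ∈ D | carry ℓ ((shift2 ℓ)^[k] (U d)) = 1}

lemma IsSolution.carry_eq_ite (hU : IsSolution D ℓ U) (d k : ℕ) :
    carry ℓ ((shift2 ℓ)^[k] (U d)) = if carry ℓ ((shift2 ℓ)^[k] (U d)) = 1 then 1 else 0 := by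
  have := carry_le_one (iterate_shift2_le (hU.bounded d) k)
  split_ifs <;> omega

lemma IsSolution.two_mul_sum_iterate (hU : IsSolution D ℓ U) (k : ℕ) :
    2 * ∑ d ∈ D, d * (shift2 ℓ)^[k] (U d) =
      ∑ d ∈ D, d * (shift2 ℓ)^[k + 1] (U d) + (∑ d ∈ carrySet D ℓ U k, d) * (2 ^ ℓ - 1) := by
  rw [carrySet, sum_filter, mul_sum, sum_mul, ← sum_add_distrib]
  refine sum_congr rfl fun d _ => ?_
  have hc := carry_le_one (iterate_shift2_le (hU.bounded d) k)
  rw [Function.iterate_succ_apply', mul_left_comm, two_mul_eq_shift2_add_carry]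
  split_ifs with h
  · rw [h]; ring
  · rw [show carry ℓ ((shift2 ℓ)^[k] (U d)) = 0 by omega]; ring

lemma IsSolution.dvd_sum_iterate (hU : IsSolution D ℓ U) (k : ℕ) :
    2 ^ ℓ - 1 ∣ ∑ d ∈ D, d * (shift2 ℓ)^[k] (U d) := by
  induction k with
  | zero => exact hU.dvd
  | succ k ih =>
    refine (Nat.dvd_add_left (dvd_mul_left _ (∑ d ∈ carrySet D ℓ U k, d))).1 ?_
    rw [← hU.two_mul_sum_iterate]
    exact ih.mul_left 2

lemma IsSolution.two_mul_supportMap (hU : IsSolution D ℓ U) (k : ℕ) :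
    2 * supportMap D ℓ U k = supportMap D ℓ U (k + 1) + ∑ d ∈ carrySet D ℓ U k, d := by
  have hT : 0 < 2 ^ ℓ - 1 := Nat.sub_pos_of_lt (Nat.one_lt_two_pow (by have := hU.len_pos; omega))
  have h := hU.two_mul_sum_iterate k
  obtain ⟨a, ha⟩ := hU.dvd_sum_iterate k
  obtain ⟨b, hb⟩ := hU.dvd_sum_iterate (k + 1)
  simp only [supportMap, ha, hb, Nat.mul_div_cancel_left _ hT]
  rw [ha, hb] at h
  exact Nat.eq_of_mul_eq_mul_left hT (by linarith)

lemma IsSolution.supportMap_pos (hU : IsSolution D ℓ U) (k : ℕ) : 0 < supportMap D ℓ U k := by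
  have hT : 0 < 2 ^ ℓ - 1 := Nat.sub_pos_of_lt (Nat.one_lt_two_pow (by have := hU.len_pos; omega))
  obtain ⟨d, hd, hpos⟩ := sum_pos_iff.1 hU.pos
  have hk : 0 < d * (shift2 ℓ)^[k] (U d) :=
    Nat.mul_pos (Nat.pos_of_mul_pos_right hpos)
      (iterate_shift2_pos hU.len_pos (hU.bounded d) (Nat.pos_of_mul_pos_left hpos) k)
  exact Nat.div_pos (Nat.le_of_dvd ((single_le_sum (fun _ _ => Nat.zero_le _) hd).trans_lt' hk)
    (hU.dvd_sum_iterate k)) hT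

lemma IsSolution.supportMap_length (hU : IsSolution D ℓ U) :
    supportMap D ℓ U ℓ = supportMap D ℓ U 0 := by
  simp only [supportMap, iterate_shift2_self (hU.bounded _), Function.iterate_zero_apply]

lemma IsSolution.sum_card_carrySet (hU : IsSolution D ℓ U) :
    ∑ k ∈ range ℓ, #(carrySet D ℓ U k) = weight D U := by
  simp only [carrySet, card_filter, ← hU.carry_eq_ite]
  rw [sum_comm]
  exact sum_congr rfl fun d _ => sum_carry_iterate_shift2 hU.len_pos (hU.bounded d)

end Solution

lemma pow_le_prod_of_le_mul_succ {R : Type*} [CommSemiring R] [LinearOrder R]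
    [IsStrictOrderedRing R]
    {ℓ : ℕ} {a : R} {b f : ℕ → R} (ha : 0 ≤ a) (hb : ∀ k, 0 ≤ b k) (hf : 0 < f 0)
    (h : ∀ k < ℓ, a * f k ≤ b k * f (k + 1)) (hper : f ℓ = f 0) :
    a ^ ℓ ≤ ∏ k ∈ range ℓ, b k := by
  have key : ∀ j ≤ ℓ, a ^ j * f 0 ≤ (∏ k ∈ range j, b k) * f j := by
    intro j hj
    induction j with
    | zero => simp
    | succ j ih =>
      calc a ^ (j + 1) * f 0 = a * (a ^ j * f 0) := by ring
        _ ≤ a * ((∏ k ∈ range j, b k) * f j) := mul_le_mul_of_nonneg_left (ih (by omega)) ha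
        _ = (∏ k ∈ range j, b k) * (a * f j) := by ring
        _ ≤ (∏ k ∈ range j, b k) * (b j * f (j + 1)) :=
          mul_le_mul_of_nonneg_left (h j (by omega)) (prod_nonneg fun k _ => hb k)
        _ = (∏ k ∈ range (j + 1), b k) * f (j + 1) := by rw [prod_range_succ]; ring
  exact le_of_mul_le_mul_right (hper ▸ key ℓ le_rfl) hf

theorem IsSolution.two_mul_le_of_potential {D : Finset ℕ} {ℓ : ℕ} {U : ℕ → ℕ}
    (hU : IsSolution D ℓ U) {c : ℕ} (F : ℕ → ℚ) (hF : ∀ x, 0 < x → 0 < F x)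
    (hstep : ∀ x x' (S : Finset ℕ), S ⊆ D → 0 < x → 0 < x' → 2 * x = x' + ∑ d ∈ S, d →
      4 * F x ≤ 2 ^ (c * #S) * F x') :
    2 * ℓ ≤ c * weight D U := by
  have h := pow_le_prod_of_le_mul_succ (ℓ := ℓ) (f := fun k => F (supportMap D ℓ U k))
    (b := fun k => 2 ^ (c * #(carrySet D ℓ U k))) (by norm_num) (fun _ => by positivity)
    (hF _ (hU.supportMap_pos 0))
    (fun k _ => hstep _ _ _ (filter_subset _ _) (hU.supportMap_pos k) (hU.supportMap_pos _)
      (hU.two_mul_supportMap k))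
    (by rw [hU.supportMap_length])
  rw [prod_pow_eq_pow_sum, ← mul_sum, hU.sum_card_carrySet,
    show (4 : ℚ) ^ ℓ = 2 ^ (2 * ℓ) by rw [pow_mul]; norm_num] at h
  exact (pow_le_pow_iff_right₀ one_lt_two).1 h

def Dset (n : ℕ) : Finset ℕ :=
  ((oddUpTo (2 ^ (n + 1) - 3)).erase (2 ^ n - 1)).erase (3 * 2 ^ (n - 1) - 1)

lemma mem_Dset {m d : ℕ} :
    d ∈ Dset (m + 2) ↔ d % 2 = 1 ∧ d ≤ 8 * 2 ^ m - 3 ∧ d ≠ 4 * 2 ^ m - 1 ∧ d ≠ 6 * 2 ^ m - 1 := by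
  rw [Dset, show 2 ^ (m + 2 + 1) = 8 * 2 ^ m by ring, show 2 ^ (m + 2) = 4 * 2 ^ m by ring,
    show 3 * 2 ^ (m + 2 - 1) = 6 * 2 ^ m by rw [show m + 2 - 1 = m + 1 by omega]; ring]
  simp only [oddUpTo, mem_erase, mem_filter, mem_range, Nat.lt_succ_iff]
  tauto

lemma ordCompl_two_two_mul (x : ℕ) : ordCompl[2] (2 * x) = ordCompl[2] x := by
  simpa using Nat.ordCompl_self_pow_mul x 1 Nat.prime_two

lemma ordCompl_two_of_odd {x : ℕ} (hx : x % 2 = 1) : ordCompl[2] x = x :=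
  (Nat.ordCompl_eq_self_iff_zero_or_not_dvd x Nat.prime_two).2 (Or.inr (by omega))

section Potential

variable {m : ℕ}

/-- The top of the danger zone of the doubling chain `ω, 2ω, 4ω, …`: the last term not
exceeding `8·2^m - 2`, except that the chain of `3` is stopped at `3·2^m`, below the excluded
cut `6·2^m - 1`. -/
def dangerTop (m ω : ℕ) : ℕ :=
  if ω = 3 then 3 * 2 ^ m else ω * 2 ^ Nat.log 2 ((8 * 2 ^ m - 2) / ω)

def IsDangerous (m x : ℕ) : Prop := 3 ≤ ordCompl[2] x ∧ 2 * x ≤ dangerTop m (ordCompl[2] x)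

open Classical in
/-- The value `1/2` at `4·2^m + 1` and `4·2^m + 2` pays for the two cuts `8·2^m + 2 ↦ 5` and
`8·2^m + 4 ↦ 7` that start above `8·2^m`. -/
noncomputable def theta (m x : ℕ) : ℚ :=
  if IsDangerous m x then 8 * (2 ^ m) ^ 2 / (dangerTop m (ordCompl[2] x) : ℚ) ^ 2
  else if x = 4 * 2 ^ m + 1 ∨ x = 4 * 2 ^ m + 2 then 1 / 2 else 1

lemma le_dangerTop {ω k : ℕ} (hω : 0 < ω) (h3 : ω ≠ 3) (h : ω * 2 ^ k ≤ 8 * 2 ^ m - 2) :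
    ω * 2 ^ k ≤ dangerTop m ω := by
  rw [dangerTop, if_neg h3]
  refine Nat.mul_le_mul_left ω (Nat.pow_le_pow_right two_pos (Nat.le_log_of_pow_le one_lt_two ?_))
  rw [Nat.le_div_iff_mul_le hω, mul_comm]
  exact h

lemma lt_two_mul_dangerTop {ω : ℕ} (hω : 0 < ω) (h3 : ω ≠ 3) :
    8 * 2 ^ m - 2 < 2 * dangerTop m ω := by
  rw [dangerTop, if_neg h3]
  have h := Nat.lt_pow_succ_log_self one_lt_two ((8 * 2 ^ m - 2) / ω)
  rw [Nat.div_lt_iff_lt_mul hω, pow_succ] at h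
  linarith

lemma IsDangerous.dangerTop_le {x : ℕ} (h : IsDangerous m x) :
    dangerTop m (ordCompl[2] x) ≤ 8 * 2 ^ m - 2 := by
  obtain ⟨h3, h2x⟩ := h
  have hωx := Nat.ordCompl_le x 2
  generalize ordCompl[2] x = ω at *
  have hP : 1 ≤ 2 ^ m := Nat.one_le_two_pow
  rw [dangerTop] at h2x ⊢
  split_ifs at h2x ⊢ with hω
  · omega
  by_cases hle : ω ≤ 8 * 2 ^ m - 2
  · calc ω * 2 ^ Nat.log 2 ((8 * 2 ^ m - 2) / ω)
          ≤ ω * ((8 * 2 ^ m - 2) / ω) :=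
          Nat.mul_le_mul_left _ (Nat.pow_log_le_self 2 (Nat.div_pos hle (by omega)).ne')
      _ ≤ 8 * 2 ^ m - 2 := Nat.mul_div_le _ _
  · rw [Nat.div_eq_of_lt (by omega), Nat.log_zero_right, pow_zero, mul_one] at h2x
    omega

lemma IsDangerous.three_mul_le_dangerTop {x : ℕ} (h : IsDangerous m x) :
    3 * 2 ^ m ≤ dangerTop m (ordCompl[2] x) := by
  by_cases hω : ordCompl[2] x = 3
  · rw [hω, dangerTop, if_pos rfl]
  · have := lt_two_mul_dangerTop (m := m) (by have := h.1; omega) hω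
    have : 1 ≤ 2 ^ m := Nat.one_le_two_pow
    omega

lemma IsDangerous.two_mul_le {x : ℕ} (h : IsDangerous m x) : 2 * x ≤ 8 * 2 ^ m - 2 :=
  h.2.trans h.dangerTop_le

lemma theta_of_isDangerous {x : ℕ} (h : IsDangerous m x) :
    theta m x = 8 * (2 ^ m) ^ 2 / (dangerTop m (ordCompl[2] x) : ℚ) ^ 2 := by
  rw [theta, if_pos h]

lemma theta_of_special {x : ℕ} (hx : x = 4 * 2 ^ m + 1 ∨ x = 4 * 2 ^ m + 2) :
    theta m x = 1 / 2 := by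
  have : ¬IsDangerous m x := fun h => by have := h.two_mul_le; omega
  rw [theta, if_neg this, if_pos hx]

lemma theta_of_not_isDangerous {x : ℕ} (h : ¬IsDangerous m x)
    (hx : ¬(x = 4 * 2 ^ m + 1 ∨ x = 4 * 2 ^ m + 2)) : theta m x = 1 := by
  rw [theta, if_neg h, if_neg hx]

lemma theta_le_one (x : ℕ) : theta m x ≤ 1 := by
  unfold theta
  split_ifs with h
  · have h3 : ((3 * 2 ^ m : ℕ) : ℚ) ≤ dangerTop m (ordCompl[2] x) := by
      exact_mod_cast h.three_mul_le_dangerTop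
    push_cast at h3
    have hP : (0 : ℚ) < 2 ^ m := by positivity
    rw [div_le_one (pow_pos (by linarith) 2)]
    nlinarith
  all_goals norm_num

lemma one_eighth_le_theta (x : ℕ) : 1 / 8 ≤ theta m x := by
  unfold theta
  split_ifs with h
  · have h8 : (dangerTop m (ordCompl[2] x) : ℚ) ≤ 8 * 2 ^ m := by
      exact_mod_cast h.dangerTop_le.trans (Nat.sub_le _ _)
    have hW : (0 : ℚ) < dangerTop m (ordCompl[2] x) := by
      exact_mod_cast (Nat.mul_pos three_pos Nat.one_le_two_pow).trans_le h.three_mul_le_dangerTop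
    rw [le_div_iff₀ (pow_pos hW 2)]
    nlinarith
  all_goals norm_num

lemma IsDangerous.sq_mul_theta_le {x : ℕ} (h : IsDangerous m x) :
    ((2 * x : ℕ) : ℚ) ^ 2 * theta m x ≤ 8 * (2 ^ m) ^ 2 := by
  have hW : (0 : ℚ) < dangerTop m (ordCompl[2] x) := by
    exact_mod_cast (Nat.mul_pos three_pos Nat.one_le_two_pow).trans_le h.three_mul_le_dangerTop
  have h2 : ((2 * x : ℕ) : ℚ) ≤ dangerTop m (ordCompl[2] x) := by exact_mod_cast h.2
  rw [theta_of_isDangerous h, mul_div_assoc', div_le_iff₀ (by positivity)]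
  have := pow_le_pow_left₀ (by positivity) h2 2
  nlinarith [show (0 : ℚ) < 2 ^ m by positivity]

lemma theta_two_mul_of_isDangerous {x : ℕ} (h : IsDangerous m (2 * x)) :
    theta m (2 * x) = theta m x := by
  rw [IsDangerous, ordCompl_two_two_mul] at h
  have hx : IsDangerous m x := ⟨h.1, by omega⟩
  rw [theta_of_isDangerous hx, theta_of_isDangerous (by rwa [IsDangerous, ordCompl_two_two_mul]),
    ordCompl_two_two_mul]

lemma theta_le_theta_two_mul (hm : 1 ≤ m) (x : ℕ) : theta m x ≤ theta m (2 * x) := by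
  have hP : 2 ≤ 2 ^ m := Nat.le_self_pow (by omega) 2
  by_cases hd : IsDangerous m (2 * x)
  · rw [theta_two_mul_of_isDangerous hd]
  by_cases hs : 2 * x = 4 * 2 ^ m + 1 ∨ 2 * x = 4 * 2 ^ m + 2
  · have hx : x = 2 * 2 ^ m + 1 := by omega
    have hxd : IsDangerous m x := by
      rw [IsDangerous, ordCompl_two_of_odd (by omega)]
      refine ⟨by omega, ?_⟩
      simpa [mul_comm] using le_dangerTop (m := m) (k := 1) (by omega) (by omega) (by omega)
    have h := hxd.sq_mul_theta_le
    rw [theta_of_special hs, hx]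
    rw [hx] at h
    push_cast at h
    have : (2 : ℚ) ≤ 2 ^ m := by exact_mod_cast hP
    nlinarith [one_eighth_le_theta (m := m) (2 * 2 ^ m + 1)]
  · rw [theta_of_not_isDangerous hd hs]
    exact theta_le_one x

lemma isDangerous_or_le {x : ℕ} (hx : x ≠ 0) (hle : 2 * x ≤ 8 * 2 ^ m - 2)
    (h4 : 2 * x ≠ 4 * 2 ^ m) (h6 : 2 * x ≠ 6 * 2 ^ m) : IsDangerous m x ∨ x ≤ 2 ^ m := by
  have hodd := Nat.not_dvd_ordCompl Nat.prime_two hx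
  have h2x : 2 * x = ordCompl[2] x * 2 ^ (x.factorization 2 + 1) := by
    conv_lhs => rw [← Nat.ordProj_mul_ordCompl_eq_self x 2]
    ring
  unfold IsDangerous
  generalize ordCompl[2] x = ω, x.factorization 2 + 1 = f at *
  have hpow : ∀ k, 2 ^ f < 2 ^ k ↔ f < k := fun k => Nat.pow_lt_pow_iff_right one_lt_two
  have hm2 : 2 ^ (m + 2) = 4 * 2 ^ m := by ring
  have hm3 : 2 ^ (m + 3) = 8 * 2 ^ m := by ring
  rcases (by omega : ω = 1 ∨ ω = 3 ∨ 5 ≤ ω) with rfl | rfl | h5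
  · right
    have : f < m + 3 := (hpow _).1 (by omega)
    have : f ≠ m + 2 := by rintro rfl; omega
    have : 2 ^ f ≤ 2 ^ (m + 1) := Nat.pow_le_pow_right two_pos (by omega)
    rw [pow_succ] at this
    omega
  · left
    have : f < m + 2 := (hpow _).1 (by omega)
    have : f ≠ m + 1 := by rintro rfl; rw [pow_succ] at h2x; omega
    have : 2 ^ f ≤ 2 ^ m := Nat.pow_le_pow_right two_pos (by omega)
    exact ⟨le_rfl, by rw [dangerTop, if_pos rfl]; omega⟩
  · exact .inl ⟨by omega, h2x ▸ le_dangerTop (by omega) (by omega) (h2x ▸ hle)⟩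

/-- The excluded cuts `4·2^m - 1` and `6·2^m - 1` are exactly what makes a cut down to `1`
affordable. -/
lemma sq_mul_theta_le_of_mem {x : ℕ} (hx : x ≠ 0) (hd : 2 * x - 1 ∈ Dset (m + 2)) :
    ((2 * x : ℕ) : ℚ) ^ 2 * theta m x ≤ 8 * (2 ^ m) ^ 2 := by
  obtain ⟨-, hle, h4, h6⟩ := mem_Dset.1 hd
  rcases isDangerous_or_le (m := m) hx (by omega) (by omega) (by omega) with h | h
  · exact h.sq_mul_theta_le
  · have h' : ((2 * x : ℕ) : ℚ) ≤ 2 * 2 ^ m := by exact_mod_cast (by omega : 2 * x ≤ 2 * 2 ^ m)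
    have := theta_le_one (m := m) x
    have := one_eighth_le_theta (m := m) x
    nlinarith [sq_nonneg ((2 * x : ℕ) : ℚ)]

lemma exists_dangerTop_eq_mul (hm : 1 ≤ m) {x : ℕ} (hodd : x % 2 = 1) (h3 : 3 ≤ x)
    (hle : 2 * x ≤ 8 * 2 ^ m - 2) :
    IsDangerous m x ∧ ∃ Q, dangerTop m x = x * Q ∧ Q ≤ 2 ^ m ∧ (9 ≤ x → 2 * Q ≤ 2 ^ m) := by
  have hP : 2 ≤ 2 ^ m := Nat.le_self_pow (by omega) 2
  by_cases hx3 : x = 3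
  · subst hx3
    refine ⟨⟨by rw [ordCompl_two_of_odd rfl], ?_⟩, 2 ^ m, by rw [dangerTop, if_pos rfl], le_rfl,
      by omega⟩
    rw [ordCompl_two_of_odd rfl, dangerTop, if_pos rfl]
    omega
  have hd : IsDangerous m x := by
    rw [IsDangerous, ordCompl_two_of_odd hodd]
    exact ⟨h3, by simpa [mul_comm] using le_dangerTop (k := 1) (by omega) hx3 (by omega)⟩
  have hW := hd.dangerTop_le
  rw [ordCompl_two_of_odd hodd, dangerTop, if_neg hx3] at hW
  refine ⟨hd, _, by rw [dangerTop, if_neg hx3], ?_, fun h9 => ?_⟩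
  all_goals
    set L := Nat.log 2 ((8 * 2 ^ m - 2) / x)
  · have : 5 * 2 ^ L ≤ x * 2 ^ L := Nat.mul_le_mul_right _ (by omega)
    have : 2 ^ L < 2 ^ (m + 1) := by rw [pow_succ]; omega
    have := (Nat.pow_lt_pow_iff_right one_lt_two).1 this
    exact Nat.pow_le_pow_right two_pos (by omega)
  · have : 9 * 2 ^ L ≤ x * 2 ^ L := Nat.mul_le_mul_right _ h9
    have : 2 ^ L < 2 ^ m := by omega
    rw [← pow_succ']
    exact Nat.pow_le_pow_right two_pos ((Nat.pow_lt_pow_iff_right one_lt_two).1 this)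

noncomputable def potential (m x : ℕ) : ℚ := (x : ℚ) ^ 2 * theta m x

lemma potential_pos {x : ℕ} (hx : 0 < x) : 0 < potential m x :=
  mul_pos (by positivity) ((by norm_num : (0 : ℚ) < 1 / 8).trans_le (one_eighth_le_theta x))

lemma four_mul_potential_le_potential_two_mul (hm : 1 ≤ m) (x : ℕ) :
    4 * potential m x ≤ potential m (2 * x) := by
  unfold potential
  calc 4 * ((x : ℚ) ^ 2 * theta m x) = ((2 * x : ℕ) : ℚ) ^ 2 * theta m x := by push_cast; ring
    _ ≤ ((2 * x : ℕ) : ℚ) ^ 2 * theta m (2 * x) :=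
      mul_le_mul_of_nonneg_left (theta_le_theta_two_mul hm x) (sq_nonneg _)

lemma four_mul_potential_le_of_cut_to_one {x : ℕ} (hx : x ≠ 0) (hd : 2 * x - 1 ∈ Dset (m + 2)) :
    4 * potential m x ≤ 8 * (2 ^ m) ^ 2 * potential m 1 := by
  have h1 : theta m 1 = 1 := theta_of_not_isDangerous
    (by rw [IsDangerous, ordCompl_two_of_odd rfl]; omega)
    (by have : 0 < 2 ^ m := Nat.two_pow_pos m; omega)
  have := sq_mul_theta_le_of_mem hx hd
  push_cast at this
  rw [potential, potential, h1, Nat.cast_one, one_pow, one_mul, mul_one]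
  linarith

lemma sq_mul_theta_le_of_cut (hm : 1 ≤ m) {d x x' Q : ℕ} (hd : d ∈ Dset (m + 2))
    (h : 2 * x = x' + d) (hQ : Q ≤ 2 ^ m) (hQ9 : 9 ≤ x' → 2 * Q ≤ 2 ^ m)
    (hW : x' * Q ≤ 8 * 2 ^ m - 2) :
    ((2 * x * Q : ℕ) : ℚ) ^ 2 * theta m x ≤ (8 * (2 ^ m) ^ 2) ^ 2 := by
  have hP : 2 ≤ 2 ^ m := Nat.le_self_pow (by omega) 2
  obtain ⟨hdo, hdle, -, -⟩ := mem_Dset.1 hd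
  by_cases hs : x = 4 * 2 ^ m + 1 ∨ x = 4 * 2 ^ m + 2
  · have h1 : 2 * x * Q ≤ (8 * 2 ^ m + 4) * 2 ^ m := Nat.mul_le_mul (by omega) hQ
    have h2 : ((8 * 2 ^ m + 4) * 2 ^ m) ^ 2 ≤ 2 * (8 * (2 ^ m) ^ 2) ^ 2 := by nlinarith
    have h3 : ((2 * x * Q : ℕ) : ℚ) ^ 2 ≤ 2 * (8 * (2 ^ m) ^ 2) ^ 2 := by
      exact_mod_cast (Nat.pow_le_pow_left h1 2).trans h2
    rw [theta_of_special hs]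
    linarith
  have h1 : 2 * x * Q ≤ 8 * (2 ^ m) ^ 2 := by
    by_cases h9 : 9 ≤ x'
    · have e1 : 2 * x * Q = x' * Q + d * Q := by rw [h]; ring
      have e2 : d * Q ≤ 8 * 2 ^ m * Q := Nat.mul_le_mul_right Q (by omega)
      have e3 : 4 * 2 ^ m * (2 * Q) ≤ 4 * 2 ^ m * 2 ^ m := Nat.mul_le_mul_left _ (hQ9 h9)
      have e4 : 2 * 2 ^ m ≤ 2 ^ m * 2 ^ m := Nat.mul_le_mul_right _ hP
      have e5 : x' * Q + 2 ≤ 8 * 2 ^ m := by omega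
      rw [sq]
      linarith
    · have : 2 * x ≤ 8 * 2 ^ m := by omega
      nlinarith
  have h2 : ((2 * x * Q : ℕ) : ℚ) ^ 2 ≤ (8 * (2 ^ m) ^ 2) ^ 2 := by
    exact_mod_cast Nat.pow_le_pow_left h1 2
  nlinarith [theta_le_one (m := m) x, one_eighth_le_theta (m := m) x]

lemma four_mul_potential_le_of_cut_to_middle (hm : 1 ≤ m) {d x x' : ℕ} (hd : d ∈ Dset (m + 2))
    (h : 2 * x = x' + d) (h3 : 3 ≤ x') (hle : 2 * x' ≤ 8 * 2 ^ m - 2) :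
    4 * potential m x ≤ 8 * (2 ^ m) ^ 2 * potential m x' := by
  have hodd : x' % 2 = 1 := by have := (mem_Dset.1 hd).1; omega
  obtain ⟨hx'd, Q, hW, hQ, hQ9⟩ := exists_dangerTop_eq_mul hm hodd h3 hle
  have hx'W := hx'd.2
  have hWle := hx'd.dangerTop_le
  rw [ordCompl_two_of_odd hodd, hW] at hx'W hWle
  have key := sq_mul_theta_le_of_cut hm hd h hQ hQ9 hWle
  have hθ : theta m x' = 8 * (2 ^ m) ^ 2 / ((x' : ℚ) * Q) ^ 2 := by
    rw [theta_of_isDangerous hx'd, ordCompl_two_of_odd hodd, hW]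
    push_cast
    ring
  have hQ0 : (0 : ℚ) < Q := by exact_mod_cast Nat.pos_of_ne_zero (by rintro rfl; omega)
  rw [potential, potential, hθ, show (x' : ℚ) ^ 2 * (8 * (2 ^ m) ^ 2 / ((x' : ℚ) * Q) ^ 2) =
      8 * (2 ^ m) ^ 2 / (Q : ℚ) ^ 2 by field_simp, ← mul_div_assoc, le_div_iff₀ (by positivity)]
  push_cast at key
  linarith

lemma four_mul_potential_le_of_cut_to_large (hm : 2 ≤ m) {d x x' : ℕ} (hd : d ∈ Dset (m + 2))
    (h : 2 * x = x' + d) (hlt : 8 * 2 ^ m - 2 < 2 * x') :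
    4 * potential m x ≤ 8 * (2 ^ m) ^ 2 * potential m x' := by
  have hP : 4 ≤ 2 ^ m := Nat.pow_le_pow_right two_pos hm
  obtain ⟨-, hdle, -, -⟩ := mem_Dset.1 hd
  have h3 : ((2 * x : ℕ) : ℚ) ≤ 3 * x' := by exact_mod_cast (by omega : 2 * x ≤ 3 * x')
  have hP' : (3 : ℚ) ≤ 2 ^ m := by exact_mod_cast (by omega : 3 ≤ 2 ^ m)
  push_cast at h3
  have hθ := theta_le_one (m := m) x
  have hθ' := one_eighth_le_theta (m := m) x'
  unfold potential
  calc 4 * ((x : ℚ) ^ 2 * theta m x) ≤ (2 * (x : ℚ)) ^ 2 := by nlinarith [sq_nonneg (x : ℚ)]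
    _ ≤ (3 * (x' : ℚ)) ^ 2 := pow_le_pow_left₀ (by positivity) h3 2
    _ ≤ ((2 : ℚ) ^ m) ^ 2 * (x' : ℚ) ^ 2 := by
      have h9 : (9 : ℚ) ≤ (2 ^ m) ^ 2 := by nlinarith
      nlinarith [mul_le_mul_of_nonneg_right h9 (sq_nonneg (x' : ℚ))]
    _ ≤ 8 * (2 ^ m) ^ 2 * ((x' : ℚ) ^ 2 * theta m x') := by
      nlinarith [mul_nonneg (sq_nonneg ((2 : ℚ) ^ m)) (sq_nonneg (x' : ℚ))]

lemma four_mul_potential_le_of_single_cut (hm : 2 ≤ m) {d x x' : ℕ} (hd : d ∈ Dset (m + 2))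
    (hx : x ≠ 0) (hx' : 0 < x') (h : 2 * x = x' + d) :
    4 * potential m x ≤ 2 ^ (2 * m + 3) * potential m x' := by
  rw [show (2 : ℚ) ^ (2 * m + 3) = 8 * (2 ^ m) ^ 2 by ring]
  have hodd : x' % 2 = 1 := by have := (mem_Dset.1 hd).1; omega
  by_cases hle : 2 * x' ≤ 8 * 2 ^ m - 2
  · rcases (by omega : x' = 1 ∨ 3 ≤ x') with rfl | h3
    · exact four_mul_potential_le_of_cut_to_one hx (by rwa [show 2 * x - 1 = d by omega])
    · exact four_mul_potential_le_of_cut_to_middle (by omega) hd h h3 hle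
  · exact four_mul_potential_le_of_cut_to_large hm hd h (by omega)

lemma sq_eight_mul_le_pow_pred {B c : ℕ} (hB : 256 ≤ B) (hc : 2 ≤ c) :
    (8 * c) ^ 2 ≤ B ^ (c - 1) := by
  induction c, hc using Nat.le_induction with
  | base => simpa using hB
  | succ c hc ih =>
    rw [show c + 1 - 1 = c - 1 + 1 by omega, pow_succ B]
    calc (8 * (c + 1)) ^ 2 ≤ (8 * c) ^ 2 * 4 := by nlinarith
      _ ≤ B ^ (c - 1) * B := Nat.mul_le_mul ih (by omega)

lemma four_mul_potential_le_of_two_le_card (hm : 3 ≤ m) {x x' : ℕ} {S : Finset ℕ}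
    (hS : S ⊆ Dset (m + 2)) (hc : 2 ≤ #S) (hx' : 0 < x') (h : 2 * x = x' + ∑ d ∈ S, d) :
    4 * potential m x ≤ 2 ^ ((2 * m + 3) * #S) * potential m x' := by
  set c := #S
  have hP : 8 ≤ 2 ^ m := Nat.pow_le_pow_right two_pos hm
  have hsum : ∑ d ∈ S, d ≤ c * (8 * 2 ^ m - 3) := by
    simpa using sum_le_card_nsmul S id _ fun d hd => (mem_Dset.1 (hS hd)).2.1
  have hc8 : c * (8 * 2 ^ m - 3) + 3 * c = 8 * 2 ^ m * c := by
    rw [mul_comm 3, ← mul_add, Nat.sub_add_cancel (by omega), mul_comm]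
  have h2x : 2 * x ≤ x' * (8 * 2 ^ m * c) := by
    obtain ⟨k, rfl⟩ : ∃ k, x' = k + 1 := ⟨x' - 1, by omega⟩
    have : k ≤ k * (8 * 2 ^ m * c) := Nat.le_mul_of_pos_right k (by positivity)
    rw [add_one_mul]
    omega
  have hpow := sq_eight_mul_le_pow_pred (B := 8 * (2 ^ m) ^ 2) (by nlinarith) hc
  have hnat : (2 * x) ^ 2 * 8 ≤ (8 * (2 ^ m) ^ 2) ^ c * x' ^ 2 :=
    calc (2 * x) ^ 2 * 8 ≤ (x' * (8 * 2 ^ m * c)) ^ 2 * 8 := by gcongr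
      _ = x' ^ 2 * (8 * c) ^ 2 * (8 * (2 ^ m) ^ 2) := by ring
      _ ≤ x' ^ 2 * (8 * (2 ^ m) ^ 2) ^ (c - 1) * (8 * (2 ^ m) ^ 2) := by gcongr
      _ = (8 * (2 ^ m) ^ 2) ^ c * x' ^ 2 := by
        rw [mul_assoc, ← pow_succ, Nat.sub_add_cancel (by omega), mul_comm]
  have hq : ((2 * x : ℕ) : ℚ) ^ 2 * 8 ≤ (8 * (2 ^ m) ^ 2) ^ c * (x' : ℚ) ^ 2 := by
    exact_mod_cast hnat
  rw [pow_mul, show (2 : ℚ) ^ (2 * m + 3) = 8 * (2 ^ m) ^ 2 by ring]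
  push_cast at hq
  unfold potential
  have hB : (0 : ℚ) ≤ (8 * (2 ^ m) ^ 2) ^ c * (x' : ℚ) ^ 2 := by positivity
  nlinarith [theta_le_one (m := m) x, one_eighth_le_theta (m := m) x', sq_nonneg (x : ℚ)]

theorem four_mul_potential_le (hm : 3 ≤ m) {x x' : ℕ} {S : Finset ℕ} (hS : S ⊆ Dset (m + 2))
    (hx : 0 < x) (hx' : 0 < x') (h : 2 * x = x' + ∑ d ∈ S, d) :
    4 * potential m x ≤ 2 ^ ((2 * m + 3) * #S) * potential m x' := by
  rcases (by omega : #S = 0 ∨ #S = 1 ∨ 2 ≤ #S) with h0 | h1 | h2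
  · rw [card_eq_zero.1 h0, sum_empty, add_zero] at h
    rw [h0, mul_zero, pow_zero, one_mul, ← h]
    exact four_mul_potential_le_potential_two_mul (by omega) x
  · obtain ⟨d, rfl⟩ := card_eq_one.1 h1
    rw [h1, mul_one]
    rw [sum_singleton] at h
    exact four_mul_potential_le_of_single_cut (by omega) (hS (mem_singleton_self d)) hx.ne' hx' h
  · exact four_mul_potential_le_of_two_le_card hm hS h2 hx' h

end Potential

section TwoTermSolution

variable {D : Finset ℕ} {a b : ℕ}

lemma sum_sol2 (ha : a ∈ D) (hb : b ∈ D) (hab : a ≠ b) (f : ℕ → ℕ → ℕ) (hf : ∀ d, f d 0 = 0)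
    (x y : ℕ) : ∑ d ∈ D, f d (sol2 a x b y d) = f a x + f b y := by
  rw [sum_eq_add_of_mem a b ha hb hab fun c _ hc => by simp [sol2, hc.1, hc.2, hf]]
  simp [sol2, hab.symm]

lemma isSolution_sol2 (ha : a ∈ D) (hb : b ∈ D) (hab : a ≠ b) {ℓ x y : ℕ} (hℓ : 1 ≤ ℓ)
    (hx : x ≤ 2 ^ ℓ - 1) (hy : y ≤ 2 ^ ℓ - 1) (hdvd : 2 ^ ℓ - 1 ∣ a * x + b * y)
    (hpos : 0 < a * x + b * y) : IsSolution D ℓ (sol2 a x b y) := by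
  have hsum := sum_sol2 ha hb hab (fun d u => d * u) (fun _ => mul_zero _) x y
  refine ⟨hℓ, fun d => ?_, fun d hd => ?_, hsum ▸ hdvd, hsum ▸ hpos⟩
  · unfold sol2; split_ifs <;> omega
  · simp [sol2, show d ≠ a by rintro rfl; exact hd ha, show d ≠ b by rintro rfl; exact hd hb]

lemma weight_sol2 (ha : a ∈ D) (hb : b ∈ D) (hab : a ≠ b) (x y : ℕ) :
    weight D (sol2 a x b y) = s2 x + s2 y :=
  sum_sol2 ha hb hab (fun _ u => s2 u) (fun _ => rfl) x y

end TwoTermSolution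

/-- Equality is attained by `u_{3·2^m - 1} = 2^(m+3)`, `u_{8·2^m - 3} = 1` with `ℓ = 2m + 3`:
then `∑ d·u_d = 3·(2^ℓ - 1)` and the weight is `2`. -/
lemma exists_isSolution_two_mul_eq (hm : 1 ≤ m) :
    ∃ ℓ U, IsSolution (Dset (m + 2)) ℓ U ∧ 2 * ℓ = (2 * m + 3) * weight (Dset (m + 2)) U := by
  have hP : 2 ≤ 2 ^ m := Nat.le_self_pow (by omega) 2
  have hPe : 2 ^ m % 2 = 0 := Nat.two_pow_mod_two_eq_zero.2 (by omega)
  have ha : 3 * 2 ^ m - 1 ∈ Dset (m + 2) := mem_Dset.2 ⟨by omega, by omega, by omega, by omega⟩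
  have hb : 8 * 2 ^ m - 3 ∈ Dset (m + 2) := mem_Dset.2 ⟨by omega, by omega, by omega, by omega⟩
  have hab : 3 * 2 ^ m - 1 ≠ 8 * 2 ^ m - 3 := by omega
  have hℓ : 2 ^ (2 * m + 3) = 8 * 2 ^ m * 2 ^ m := by ring
  have hsum : (3 * 2 ^ m - 1) * 2 ^ (m + 3) + (8 * 2 ^ m - 3) * 1 = 3 * (2 ^ (2 * m + 3) - 1) := by
    rw [hℓ, show 2 ^ (m + 3) = 8 * 2 ^ m by ring]
    zify [show 1 ≤ 3 * 2 ^ m by omega, show 3 ≤ 8 * 2 ^ m by omega,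
      show 1 ≤ 8 * 2 ^ m * 2 ^ m by nlinarith]
    ring
  refine ⟨2 * m + 3, _, isSolution_sol2 ha hb hab (by omega) ?_ ?_ ⟨3, by rw [hsum, mul_comm]⟩
    (by rw [hsum]; have := Nat.one_lt_two_pow (n := 2 * m + 3) (by omega); omega), ?_⟩
  · have : 8 * 2 ^ m * 2 ≤ 8 * 2 ^ m * 2 ^ m := Nat.mul_le_mul_left _ hP
    rw [hℓ, show 2 ^ (m + 3) = 8 * 2 ^ m by ring]
    omega
  · have := Nat.one_lt_two_pow (n := 2 * m + 3) (by omega); omega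
  · rw [weight_sol2 ha hb hab, s2_two_pow, show s2 1 = 1 by simpa using s2_two_pow 0]
    ring

/-- For `n` large enough and `d = 2^{n+1} − 3`, the 2-density of
`D = {i : 1 ≤ i ≤ d, i odd} \ {2^n − 1, 3·2^{n−1} − 1}` is `2/(2n−1)`: every solution
of length `ℓ` satisfies `(2n−1)·s(U) ≥ 2ℓ`, and some solution attains equality. -/
theorem density_case_v :
    ∃ N : ℕ, ∀ n : ℕ, N ≤ n →
      (∀ ℓ U,
        IsSolution (((oddUpTo (2 ^ (n + 1) - 3)).erase (2 ^ n - 1)).erase (3 * 2 ^ (n - 1) - 1)) ℓ U →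
        2 * ℓ ≤ (2 * n - 1) *
          weight (((oddUpTo (2 ^ (n + 1) - 3)).erase (2 ^ n - 1)).erase (3 * 2 ^ (n - 1) - 1)) U) ∧
      (∃ ℓ U,
        IsSolution (((oddUpTo (2 ^ (n + 1) - 3)).erase (2 ^ n - 1)).erase (3 * 2 ^ (n - 1) - 1)) ℓ U ∧
        2 * ℓ = (2 * n - 1) *
          weight (((oddUpTo (2 ^ (n + 1) - 3)).erase (2 ^ n - 1)).erase (3 * 2 ^ (n - 1) - 1)) U) := by
  refine ⟨5, fun n hn => ?_⟩
  obtain ⟨m, rfl⟩ : ∃ m, n = m + 2 := ⟨n - 2, by omega⟩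
  rw [show 2 * (m + 2) - 1 = 2 * m + 3 by omega]
  refine ⟨fun ℓ U hU => ?_, exists_isSolution_two_mul_eq (by omega)⟩
  exact hU.two_mul_le_of_potential (potential m) (fun _ => potential_pos)
    (fun _ _ _ hS hx hx' h => four_mul_potential_le (by omega) hS hx hx' h)
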